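/- (Babies) For every natural number N ≥ 1, every real p ≥ 1, and every nonzero vector c ∈ ℝ^N with nonnegative coefficients that are not all equal to 0 (and, for strictness, not all equal to each other or at least one coefficient positive), appending a zero coefficient strictly increases the Generalised Differential Sparsity: S_p(c ‖ 0) > S_p(c), where c ‖ 0 is the (N+1)-dimensional vector obtained by appending the coefficient 0 to c. -/

import Mathlib

open Finset

/-- Generalised Differential Sparsity of order `p`, in its permutation-invariant
form `S_p(c) = (1/(N · Σ_i c_i^p)) · Σ_{i<j} |c_j − c_i|^p`. -/
noncomputable def gds (N : ℕ) (p : ℝ) (c : Fin N → ℝ) : ℝ :=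
  (1 / (N * ∑ i, c i ^ p)) *
    ∑ i : Fin N, ∑ j : Fin N, if i < j then |c j - c i| ^ p else 0

/-!
Write `S_p(c) = D(c) / (N · T(c))` with `T(c) = Σ c_i^p` and `D(c) = Σ_{i<j} |c_j − c_i|^p`.
Appending a zero keeps `T` and adds `T` to `D`, since each new pair contributes `|0 − c_i|^p`.
So `S_p(c ‖ 0) > S_p(c)` is equivalent to `D(c) < N · T(c)`, and this follows from
`|c_j − c_i|^p ≤ max(c_i, c_j)^p ≤ c_i^p + c_j^p`: summed over pairs it gives `D ≤ (N − 1) · T`.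
-/

section PairSums

variable {ι : Type*} [Fintype ι] [LinearOrder ι]

noncomputable def pairDiffPowSum (p : ℝ) (c : ι → ℝ) : ℝ :=
  ∑ i, ∑ j, if i < j then |c j - c i| ^ p else 0

theorem sum_sum_ite_lt_add (f : ι → ℝ) :
    ∑ i, ∑ j, (if i < j then f i + f j else 0) = (Fintype.card ι - 1 : ℝ) * ∑ i, f i := by
  have swap : ∑ i, ∑ j, (if i < j then f j else 0) = ∑ i, ∑ j, (if j < i then f i else 0) :=
    sum_comm
  have row (i : ι) : ∑ j, ((if i < j then f i else 0) + if j < i then f i else 0)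
      = Fintype.card ι * f i - f i := by
    have pair (j : ι) : ((if i < j then f i else 0) + if j < i then f i else 0)
        = f i - if i = j then f i else 0 := by
      rcases lt_trichotomy i j with h | rfl | h
      · simp [h, h.ne, not_lt_of_gt h]
      · simp
      · simp [h, h.ne', not_lt_of_gt h]
    simp only [pair, sum_sub_distrib, sum_const, card_univ, nsmul_eq_mul, sum_ite_eq, mem_univ,
      if_true]
  calc ∑ i, ∑ j, (if i < j then f i + f j else 0)
      = ∑ i, ∑ j, (if i < j then f i else 0) + ∑ i, ∑ j, (if j < i then f i else 0) := by
        simp only [← swap, ← sum_add_distrib, ite_add_zero]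
    _ = (Fintype.card ι - 1 : ℝ) * ∑ i, f i := by
        simp only [← sum_add_distrib, row, sum_sub_distrib, ← mul_sum]
        ring

theorem abs_sub_rpow_le_rpow_add_rpow {a b p : ℝ} (ha : 0 ≤ a) (hb : 0 ≤ b) (hp : 0 ≤ p) :
    |b - a| ^ p ≤ a ^ p + b ^ p := by
  have hmax : |b - a| ≤ max a b :=
    abs_sub_le_iff.2 ⟨by linarith [le_max_right a b], by linarith [le_max_left a b]⟩
  calc |b - a| ^ p ≤ max a b ^ p := Real.rpow_le_rpow (abs_nonneg _) hmax hp
    _ = max (a ^ p) (b ^ p) := Real.rpow_max ha hb hp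
    _ ≤ a ^ p + b ^ p :=
      max_le_add_of_nonneg (Real.rpow_nonneg ha p) (Real.rpow_nonneg hb p)

theorem pairDiffPowSum_le {p : ℝ} (hp : 0 ≤ p) {c : ι → ℝ} (hc : ∀ i, 0 ≤ c i) :
    pairDiffPowSum p c ≤ (Fintype.card ι - 1 : ℝ) * ∑ i, c i ^ p := by
  rw [← sum_sum_ite_lt_add]
  refine sum_le_sum fun i _ => sum_le_sum fun j _ => ?_
  split_ifs
  · exact abs_sub_rpow_le_rpow_add_rpow (hc i) (hc j) hp
  · rfl

end PairSums

section Snoc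

variable {N : ℕ} {p : ℝ}

theorem sum_snoc_zero_rpow (hp : p ≠ 0) (c : Fin N → ℝ) :
    ∑ i, (Fin.snoc c 0 : Fin (N + 1) → ℝ) i ^ p = ∑ i, c i ^ p := by
  simp [Fin.sum_univ_castSucc, Real.zero_rpow hp]

theorem pairDiffPowSum_snoc_zero {c : Fin N → ℝ} (hc : ∀ i, 0 ≤ c i) :
    pairDiffPowSum p (Fin.snoc c 0 : Fin (N + 1) → ℝ) = pairDiffPowSum p c + ∑ i, c i ^ p := by
  simp [pairDiffPowSum, Fin.sum_univ_castSucc, sum_add_distrib, (Fin.le_last _).not_gt,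
    abs_of_nonneg, hc]

end Snoc

theorem gds_eq_div (N : ℕ) (p : ℝ) (c : Fin N → ℝ) :
    gds N p c = pairDiffPowSum p c / (N * ∑ i, c i ^ p) := by
  rw [gds, one_div_mul_eq_div, pairDiffPowSum]

theorem gds_babies_general (N : ℕ) (p : ℝ) (hp : 1 ≤ p)
    (c : Fin N → ℝ) (hc0 : ∀ i, 0 ≤ c i) (hne : c ≠ 0) :
    gds (N + 1) p (Fin.snoc c 0) > gds N p c := by
  have hp0 : 0 < p := by linarith
  obtain ⟨k, hk⟩ := Function.ne_iff.mp hne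
  have hN : (0 : ℝ) < N := by exact_mod_cast k.pos
  have hT : 0 < ∑ i, c i ^ p := sum_pos' (fun i _ => Real.rpow_nonneg (hc0 i) p)
    ⟨k, mem_univ k, Real.rpow_pos_of_pos ((hc0 k).lt_of_ne' hk) p⟩
  have hD : pairDiffPowSum p c ≤ (N - 1) * ∑ i, c i ^ p := by
    simpa using pairDiffPowSum_le hp0.le hc0
  rw [gds_eq_div, gds_eq_div, pairDiffPowSum_snoc_zero hc0, sum_snoc_zero_rpow hp0.ne', gt_iff_lt,
    div_lt_div_iff₀ (by positivity) (by positivity)]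
  push_cast
  nlinarith

theorem gds_babies (N : ℕ) (hN : 1 ≤ N) (p : ℝ) (hp : 1 ≤ p)
    (c : Fin N → ℝ) (hc0 : ∀ i, 0 ≤ c i) (hne : c ≠ 0) :
    gds (N + 1) p (Fin.snoc c 0) > gds N p c :=
  gds_babies_general N p hp c hc0 hne
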